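/- arXiv:2511.14731 — 3 statements merged into one kernel-verified Lean document; each statement's English description precedes it below -/
import Mathlib

section
/- Let A be the 2 × 2 complex matrix with rows (1, 1) and (−1, 0); since det A = 1, A is invertible, so there is a representation M of the group ℤ (written multiplicatively, i.e. Multiplicative ℤ) on ℂ² in which the generator 1 acts by A. Then the group cohomology groups H⁰(ℤ, M) and H¹(ℤ, M) both vanish. -/
open CategoryTheory Matrix

noncomputable section

/-- The matrix `[[1, 1], [-1, 0]]` over `ℂ`. -/
def monodromyMatrix : Matrix (Fin 2) (Fin 2) ℂ := !![1, 1; -1, 0]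

/-- `monodromyMatrix` has determinant `1`, hence is invertible. -/
theorem monodromyMatrix_det : monodromyMatrix.det = 1 := by
  simp [monodromyMatrix, Matrix.det_fin_two_of]

/-- `monodromyMatrix` as a unit of the matrix ring. -/
def monodromyUnit : (Matrix (Fin 2) (Fin 2) ℂ)ˣ :=
  Matrix.nonsingInvUnit monodromyMatrix (by rw [monodromyMatrix_det]; exact isUnit_one)

/-- The representation of `ℤ` (written multiplicatively) on `ℂ²` for which the generator `1`
acts by the matrix `[[1, 1], [-1, 0]]`. -/
def monodromyRep : Representation ℂ (Multiplicative ℤ) (Fin 2 → ℂ) :=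
  (Units.coeHom _).comp
    ((zpowersHom (Module.End ℂ (Fin 2 → ℂ))ˣ
        (Units.map
          (Matrix.toLinAlgEquiv' :
              Matrix (Fin 2) (Fin 2) ℂ ≃ₐ[ℂ] Module.End ℂ (Fin 2 → ℂ)).toAlgHom.toMonoidHom
          monodromyUnit)))

namespace MonodromyAux

/-- The generator of `Multiplicative ℤ`. -/
def gen : Multiplicative ℤ := Multiplicative.ofAdd 1

lemma rep_gen_apply (v : Fin 2 → ℂ) :
    monodromyRep gen v = monodromyMatrix.mulVec v := by
  simp [monodromyRep, monodromyUnit, gen, Matrix.toLinAlgEquiv'_apply,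
    Matrix.nonsingInvUnit]

lemma fixed_eq_zero {v : Fin 2 → ℂ} (h : monodromyRep gen v = v) : v = 0 := by
  rw [rep_gen_apply] at h
  have h0 := congrFun h 0
  have h1 := congrFun h 1
  simp [monodromyMatrix, Matrix.mulVec, dotProduct, Fin.sum_univ_two] at h0 h1
  funext i
  fin_cases i <;> simp_all

lemma exists_preimage (v : Fin 2 → ℂ) :
    ∃ x : Fin 2 → ℂ, monodromyRep gen x - x = v := by
  refine ⟨![-v 1 - v 0, v 0], ?_⟩
  rw [rep_gen_apply]
  funext i
  fin_cases i <;>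
    simp [monodromyMatrix, Matrix.mulVec, dotProduct, Fin.sum_univ_two]

open groupCohomology

lemma cocycle_eq_zero (f : cocycles₁ (Rep.of monodromyRep)) (hgen : f gen = 0) :
    f = 0 := by
  have hinv : f gen⁻¹ = 0 := by
    have h1 : (Rep.of monodromyRep).ρ gen (f gen⁻¹) = 0 := by
      rw [cocycles₁_map_inv, hgen, neg_zero]
    have h2 := congrArg ((Rep.of monodromyRep).ρ gen⁻¹) h1
    rwa [← Module.End.mul_apply, ← _root_.map_mul, inv_mul_cancel, _root_.map_one, Module.End.one_apply,
      map_zero] at h2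
  have key : ∀ n : ℤ, f (Multiplicative.ofAdd n) = 0 := by
    intro n
    induction n using Int.induction_on with
    | zero => exact cocycles₁_map_one f
    | succ n ih =>
        have : Multiplicative.ofAdd ((n : ℤ) + 1) = Multiplicative.ofAdd (n : ℤ) * gen := rfl
        rw [this, (groupCohomology.mem_cocycles₁_iff (f : Multiplicative ℤ → Fin 2 → ℂ)).1 f.2,
          hgen, map_zero, ih, add_zero]
    | pred n ih =>
        have : Multiplicative.ofAdd (-(n : ℤ) - 1) = gen⁻¹ * Multiplicative.ofAdd (-(n : ℤ)) := by
          have h' : -(n : ℤ) - 1 = -1 + -(n : ℤ) := by ring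
          rw [h']; rfl
        rw [this, (groupCohomology.mem_cocycles₁_iff (f : Multiplicative ℤ → Fin 2 → ℂ)).1 f.2,
          ih, map_zero, hinv, add_zero]
  ext g : 1
  exact key (Multiplicative.toAdd g)

end MonodromyAux

/-- The group cohomology `H⁰(ℤ, M)` and `H¹(ℤ, M)` of the representation of `ℤ` on `ℂ²`
in which the generator acts by `[[1, 1], [-1, 0]]` both vanish. -/
theorem groupCohomology_monodromy_vanishes :
    Limits.IsZero (groupCohomology (Rep.of monodromyRep) 0) ∧
      Limits.IsZero (groupCohomology (Rep.of monodromyRep) 1) := by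
  open groupCohomology MonodromyAux in
  constructor
  · haveI : Subsingleton ((Rep.of monodromyRep).ρ.invariants) := by
      constructor
      intro x y
      have hx : x.1 = 0 := fixed_eq_zero (x.2 gen)
      have hy : y.1 = 0 := fixed_eq_zero (y.2 gen)
      exact Subtype.ext (hx.trans hy.symm)
    haveI : Subsingleton ↑(ModuleCat.of ℂ ((Rep.of monodromyRep).ρ.invariants)) := this
    exact (ModuleCat.isZero_of_subsingleton _).of_iso (groupCohomology.H0Iso _)
  · haveI : Subsingleton (groupCohomology.H1 (Rep.of monodromyRep)) := by
      refine ⟨fun a b => ?_⟩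
      suffices hc : ∀ c : groupCohomology.H1 (Rep.of monodromyRep), c = 0 by rw [hc a, hc b]
      intro c
      induction c using groupCohomology.H1_induction_on with
      | h f =>
      rw [groupCohomology.H1π_eq_zero_iff]
      obtain ⟨x, hx⟩ := exists_preimage (f gen)
      have hb := groupCohomology.d₀₁_apply_mem_cocycles₁ (A := Rep.of monodromyRep) x
      have hdiff : f - ⟨_, hb⟩ = 0 := by
        apply cocycle_eq_zero
        show (f : Multiplicative ℤ → Fin 2 → ℂ) gen -
          (groupCohomology.d₀₁ (Rep.of monodromyRep)).hom x gen = 0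
        rw [sub_eq_zero, groupCohomology.d₀₁_hom_apply]
        exact hx.symm
      have heq : f = ⟨_, hb⟩ := by rwa [sub_eq_zero] at hdiff
      rw [heq]
      exact ⟨x, rfl⟩
    exact ModuleCat.isZero_of_subsingleton _

end
end

section
/- Let p be a prime, let S be a commutative ring of characteristic p, and let J ⊆ S be a nilpotent ideal. Then the ring homomorphism Perfection(S, p) → Perfection(S/J, p) induced by the quotient map S → S/J is bijective. -/
/-- A quotient of a ring of prime characteristic `p` by a nilpotent ideal again has
characteristic `p`. -/
theorem charP_quotient_of_isNilpotent (p : ℕ) [Fact p.Prime] {S : Type*} [CommRing S]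
    [CharP S p] (J : Ideal S) (hJ : IsNilpotent J) : CharP (S ⧸ J) p := by
  apply CharP.quotient'
  intro x hx
  obtain ⟨m, hm⟩ := hJ
  have hxm : (x : S) ^ m = 0 := by
    have h1 : (x : S) ^ m ∈ J ^ m := Ideal.pow_mem_pow hx m
    rw [hm] at h1
    simpa using h1
  have hdvd : p ∣ x ^ m := by
    rw [← CharP.cast_eq_zero_iff S p]
    push_cast
    exact hxm
  rcases Nat.eq_zero_or_pos m with hm0 | _
  · subst hm0
    rw [pow_zero] at hdvd
    exact absurd (Nat.dvd_one.mp hdvd) (Fact.out : p.Prime).ne_one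
  · rw [CharP.cast_eq_zero_iff S p]
    exact (Fact.out : p.Prime).dvd_of_dvd_pow hdvd

private theorem coeff_pow_pow {p : ℕ} [Fact p.Prime] {S : Type*} [CommSemiring S] [CharP S p]
    (f : Perfection S p) (n k : ℕ) :
    Perfection.coeff S p (n + k) f ^ p ^ k = Perfection.coeff S p n f := by
  have := Perfection.coeff_iterate_frobenius f n k
  rwa [iterate_frobenius, map_pow] at this

/-- **Nilinvariance of perfection.** If `S` is a commutative ring of characteristic `p` and
`J ⊆ S` is a nilpotent ideal, then the induced map `Perfection(S, p) → Perfection(S/J, p)`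
is bijective. -/
theorem perfection_map_quotient_nilpotent_bijective (p : ℕ) [Fact p.Prime]
    (S : Type*) [CommRing S] [CharP S p] (J : Ideal S) (hJ : IsNilpotent J) :
    letI : CharP (S ⧸ J) p := charP_quotient_of_isNilpotent p J hJ
    Function.Bijective (Perfection.map p (Ideal.Quotient.mk J)) := by
  letI : CharP (S ⧸ J) p := charP_quotient_of_isNilpotent p J hJ
  obtain ⟨m, hm⟩ := hJ
  obtain ⟨k, hk⟩ : ∃ k, m ≤ p ^ k :=
    ⟨m, le_of_lt (Nat.lt_pow_self (n := m) (Fact.out : p.Prime).one_lt)⟩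
  -- elements of J raised to `p ^ k` vanish
  have key : ∀ a b : S, Ideal.Quotient.mk J a = Ideal.Quotient.mk J b →
      a ^ p ^ k = b ^ p ^ k := by
    intro a b hab
    have hmem : a - b ∈ J := Ideal.Quotient.eq.mp hab
    have hz : (a - b) ^ p ^ k = 0 := by
      have h1 : (a - b) ^ p ^ k ∈ J ^ p ^ k := Ideal.pow_mem_pow hmem _
      have h2 : J ^ p ^ k ≤ J ^ m := Ideal.pow_le_pow_right hk
      have := h2 h1
      rw [hm] at this
      simpa using this
    have : a ^ p ^ k = (b + (a - b)) ^ p ^ k := by ring_nf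
    rw [this, add_pow_char_pow, hz, add_zero]
  constructor
  · -- injectivity
    rw [injective_iff_map_eq_zero]
    intro f hf
    ext n
    have hco : Ideal.Quotient.mk J (Perfection.coeff S p (n + k) f) = 0 := by
      have := congrArg (Perfection.coeff (S ⧸ J) p (n + k)) hf
      rwa [Perfection.coeff_map, map_zero] at this
    have h0 : Perfection.coeff S p (n + k) f ^ p ^ k = 0 ^ p ^ k :=
      key _ _ (by simpa using hco)
    rw [coeff_pow_pow, zero_pow (pow_ne_zero k (Fact.out : p.Prime).ne_zero)] at h0
    simpa using h0
  · -- surjectivity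
    intro g
    choose s hs using fun n => Ideal.Quotient.mk_surjective (Perfection.coeff (S ⧸ J) p (n + k) g)
    refine ⟨⟨fun n => s n ^ p ^ k, fun n => ?_⟩, ?_⟩
    · -- (s (n+1) ^ p ^ k) ^ p = s n ^ p ^ k
      have h1 : Ideal.Quotient.mk J (s (n + 1) ^ p) = Ideal.Quotient.mk J (s n) := by
        rw [map_pow, hs, hs]
        have := Perfection.coeff_pow_p' g (n + k)
        rw [show n + 1 + k = n + k + 1 by ring]
        exact this
      have := key _ _ h1
      rw [← pow_mul] at this
      show (s (n + 1) ^ p ^ k) ^ p = s n ^ p ^ k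
      rw [← pow_mul, mul_comm (p ^ k) p, this]
    · ext n
      show Ideal.Quotient.mk J (s n ^ p ^ k) = Perfection.coeff (S ⧸ J) p n g
      rw [map_pow, hs]
      exact coeff_pow_pow g n k
end

section
/- Let p be a prime, let S be a commutative ring of characteristic p, and let I ⊆ S be an ideal such that S is I-adically complete and separated (i.e., IsAdicComplete I S: the intersection ⋂ₙ Iⁿ is zero and every I-adically Cauchy sequence has a limit). Then the ring homomorphism Perfection(S, p) → Perfection(S/I, p) induced by the quotient map S → S/I is bijective. -/
/-- If `S` is a ring of prime characteristic `p` which is `I`-adically complete (and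
separated), then `S ⧸ I` again has characteristic `p`. -/
theorem charP_quotient_of_isAdicComplete (p : ℕ) [Fact p.Prime] {S : Type*} [CommRing S]
    [CharP S p] (I : Ideal S) [IsAdicComplete I S] : CharP (S ⧸ I) p := by
  apply CharP.quotient'
  intro x hx
  by_cases hpx : p ∣ x
  · rw [CharP.cast_eq_zero_iff S p]
    exact hpx
  · -- then `(x : S)` is a unit, so `I = ⊤`; adic separatedness forces `S` to be trivial.
    have hcop : Nat.Coprime p x := ((Fact.out : p.Prime).coprime_iff_not_dvd).mpr hpx
    obtain ⟨a, b, hab⟩ := hcop.isCoprime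
    have hone : (b : S) * (x : S) = 1 := by
      have h1 : ((a * p + b * x : ℤ) : S) = ((1 : ℤ) : S) := by rw [hab]
      push_cast at h1
      rw [CharP.cast_eq_zero S p] at h1
      simpa using h1
    have hunit : IsUnit (x : S) := isUnit_iff_exists_inv.mpr ⟨(b : S), mul_comm (b : S) (x : S) ▸ hone⟩
    have htop : I = ⊤ := I.eq_top_of_isUnit_mem hx hunit
    refine IsHausdorff.haus (IsAdicComplete.toIsHausdorff (I := I) (M := S)) _ fun n => ?_
    have hsub : (I ^ n • ⊤ : Submodule S S) = ⊤ := by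
      rw [htop]
      simp [Ideal.top_pow]
    rw [hsub]
    exact SModEq.top

/-- **Perfection is insensitive to adic completion.** If `S` is a commutative ring of
characteristic `p` which is `I`-adically complete and separated, then the induced map
`Perfection(S, p) → Perfection(S/I, p)` is bijective. -/
theorem perfection_map_quotient_adicComplete_bijective (p : ℕ) [Fact p.Prime]
    (S : Type*) [CommRing S] [CharP S p] (I : Ideal S) [IsAdicComplete I S] :
    letI : CharP (S ⧸ I) p := charP_quotient_of_isAdicComplete p I
    Function.Bijective (Perfection.map p (Ideal.Quotient.mk I)) := by
  letI : CharP (S ⧸ I) p := charP_quotient_of_isAdicComplete p I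
  have hp : p.Prime := Fact.out
  have hsm : ∀ m : ℕ, (I ^ m • ⊤ : Submodule S S) = I ^ m := fun m => by
    rw [smul_eq_mul, Ideal.mul_top]
  have hcp : ∀ (f : Perfection S p) (n m : ℕ),
      Perfection.coeff S p (n + m) f ^ p ^ m = Perfection.coeff S p n f := by
    intro f n m
    induction m with
    | zero => simp
    | succ m ih =>
      rw [pow_succ', pow_mul]
      rw [show n + (m + 1) = (n + m) + 1 from rfl]
      rw [Perfection.coeff_pow_p', ih]
  have hle : ∀ m : ℕ, m + 1 ≤ p ^ m := by
    intro m
    exact Nat.lt_pow_self (n := m) hp.one_lt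
  show Function.Bijective (Perfection.map p (Ideal.Quotient.mk I))
  constructor
  · -- injectivity
    intro a b hab
    have h0 : ∀ n, Perfection.coeff S p n (a - b) ∈ I := by
      intro n
      have h := congrArg (Perfection.coeff (S ⧸ I) p n) hab
      rw [Perfection.coeff_map, Perfection.coeff_map] at h
      rw [map_sub]
      exact Ideal.Quotient.eq.mp h
    have hz : ∀ n, Perfection.coeff S p n (a - b) = 0 := by
      intro n
      refine IsHausdorff.haus (IsAdicComplete.toIsHausdorff (I := I) (M := S)) _ fun m => ?_
      rw [SModEq.zero, hsm]
      have h1 : Perfection.coeff S p (n + m) (a - b) ^ p ^ m ∈ I ^ p ^ m :=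
        Ideal.pow_mem_pow (h0 (n + m)) _
      rw [hcp] at h1
      exact Ideal.pow_le_pow_right (le_trans (Nat.le_succ m) (hle m)) h1
    have : a - b = 0 := Perfection.ext fun n => by rw [hz n, map_zero]
    exact sub_eq_zero.mp this
  · -- surjectivity
    intro g
    choose z hzz using fun n => Ideal.Quotient.mk_surjective (Perfection.coeff (S ⧸ I) p n g)
    set f : ℕ → ℕ → S := fun n k => z (n + k) ^ p ^ k with hf
    have hstep : ∀ n k, f n (k + 1) - f n k ∈ I ^ (k + 1) := by
      intro n k
      have h1 : z (n + k + 1) ^ p - z (n + k) ∈ I := by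
        refine Ideal.Quotient.eq.mp ?_
        rw [map_pow, hzz, hzz]
        exact g.2 (n + k)
      have h2 : f n (k + 1) - f n k = (z (n + k + 1) ^ p - z (n + k)) ^ p ^ k := by
        rw [sub_pow_char_pow, ← pow_mul, ← pow_succ']
        rfl
      rw [h2]
      exact Ideal.pow_le_pow_right (hle k) (Ideal.pow_mem_pow h1 _)
    have hdiff : ∀ n m j, m ≤ j → f n j - f n m ∈ I ^ m := by
      intro n m j hj
      induction j with
      | zero =>
        interval_cases m
        simpa using (I ^ 0).zero_mem
      | succ j ih =>
        rcases Nat.lt_or_ge m (j + 1) with h | h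
        · have h1 : f n (j + 1) - f n j ∈ I ^ m :=
            Ideal.pow_le_pow_right h.le (hstep n j)
          have h2 := ih (Nat.lt_succ_iff.mp h)
          simpa using add_mem h1 h2
        · have : m = j + 1 := le_antisymm hj h
          subst this
          simpa using (I ^ (j + 1)).zero_mem
    have hcauchy : ∀ n, ∀ {m k : ℕ}, m ≤ k →
        f n m ≡ f n k [SMOD (I ^ m • ⊤ : Submodule S S)] := by
      intro n m k hmk
      rw [SModEq.sub_mem, hsm]
      simpa using neg_mem (hdiff n m k hmk)
    choose x hx using fun n =>
      IsPrecomplete.prec (IsAdicComplete.toIsPrecomplete (I := I) (M := S)) (hcauchy n)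
    have hxmem : ∀ n m, x n - f n m ∈ I ^ m := by
      intro n m
      have h := hx n m
      rw [SModEq.sub_mem, hsm] at h
      simpa using neg_mem h
    have hcompat : ∀ n, x (n + 1) ^ p = x n := by
      intro n
      have key : ∀ m, x (n + 1) ^ p - x n ∈ I ^ m := by
        intro m
        have h1 : x (n + 1) ^ p - f (n + 1) m ^ p ∈ I ^ m := by
          rw [← sub_pow_char]
          exact Ideal.pow_mem_of_mem _ (hxmem (n + 1) m) p hp.pos
        have h2 : f (n + 1) m ^ p = f n (m + 1) := by
          simp only [hf]
          rw [← pow_mul, ← pow_succ, Nat.add_right_comm]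
          rfl
        have h3 : x n - f n (m + 1) ∈ I ^ m :=
          Ideal.pow_le_pow_right (Nat.le_succ m) (hxmem n (m + 1))
        rw [h2] at h1
        have h4 := sub_mem h1 h3
        simpa using h4
      have h0 : x (n + 1) ^ p - x n = 0 := by
        refine IsHausdorff.haus (IsAdicComplete.toIsHausdorff (I := I) (M := S)) _ fun m => ?_
        rw [SModEq.zero, hsm]
        exact key m
      exact sub_eq_zero.mp h0
    refine ⟨(⟨fun n => x n, hcompat⟩ : Perfection S p), ?_⟩
    refine Perfection.ext fun n => ?_
    show Ideal.Quotient.mk I (x n) = Perfection.coeff _ p n g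
    have h1 : x n - f n 1 ∈ I := by simpa using hxmem n 1
    have h2 : Ideal.Quotient.mk I (x n) = Ideal.Quotient.mk I (f n 1) :=
      Ideal.Quotient.eq.mpr h1
    rw [h2]
    simp only [hf]
    rw [pow_one, map_pow, hzz]
    exact g.2 n
end
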